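/- For every r ≥ 1 and all vectors a, b in ℝ^d, one has ⟨|a|^{r-1} a − |b|^{r-1} b, a − b⟩ ≥ (1/2) |a|^{r-1} |a − b|^2 + (1/2) |b|^{r-1} |a − b|^2, where ⟨·,·⟩ is the Euclidean inner product and |·| the Euclidean norm. -/

import Mathlib

/-!
Writing `α = |a|^{r-1}` and `β = |b|^{r-1}`, expanding `|a - b|²` gives the exact identity
`⟨α a - β b, a - b⟩ = (α + β)/2 · |a - b|² + (α - β)(|a|² - |b|²)/2`,
and the correction term is nonnegative because `t ↦ t^{r-1}` and `t ↦ t²` are both monotone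
on `[0, ∞)` when `r ≥ 1`.
-/

open scoped RealInnerProductSpace

section InnerProductSpace

variable {E : Type*} [NormedAddCommGroup E] [InnerProductSpace ℝ E]

lemma inner_smul_sub_smul_sub_eq (α β : ℝ) (a b : E) :
    ⟪α • a - β • b, a - b⟫ =
      (α + β) / 2 * ‖a - b‖ ^ 2 + (α - β) * (‖a‖ ^ 2 - ‖b‖ ^ 2) / 2 := by
  rw [norm_sub_sq_real, inner_sub_left, inner_sub_right, inner_sub_right,
    real_inner_smul_left, real_inner_smul_left, real_inner_smul_left, real_inner_smul_left,
    real_inner_self_eq_norm_sq, real_inner_self_eq_norm_sq, real_inner_comm b a]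
  ring

lemma mul_norm_sub_sq_le_inner_smul_sub_smul {α β : ℝ} {a b : E}
    (h : 0 ≤ (α - β) * (‖a‖ ^ 2 - ‖b‖ ^ 2)) :
    (α + β) / 2 * ‖a - b‖ ^ 2 ≤ ⟪α • a - β • b, a - b⟫ := by
  rw [inner_smul_sub_smul_sub_eq]
  linarith

end InnerProductSpace

lemma Real.rpow_sub_rpow_mul_sq_sub_sq_nonneg {p : ℝ} (hp : 0 ≤ p) {x y : ℝ}
    (hx : 0 ≤ x) (hy : 0 ≤ y) : 0 ≤ (x ^ p - y ^ p) * (x ^ 2 - y ^ 2) :=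
  ((Real.monotoneOn_rpow_Ici_of_exponent_nonneg hp).monovaryOn
    (fun _ hs _ _ hst => pow_le_pow_left₀ hs hst 2)).sub_mul_sub_nonneg hy hx

theorem damping_monotonicity (d : ℕ) (r : ℝ) (hr : 1 ≤ r)
    (a b : EuclideanSpace ℝ (Fin d)) :
    (inner ℝ (‖a‖ ^ (r - 1) • a - ‖b‖ ^ (r - 1) • b) (a - b) : ℝ) ≥
      (1 / 2) * ‖a‖ ^ (r - 1) * ‖a - b‖ ^ 2 + (1 / 2) * ‖b‖ ^ (r - 1) * ‖a - b‖ ^ 2 := by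
  have h := mul_norm_sub_sq_le_inner_smul_sub_smul
    (Real.rpow_sub_rpow_mul_sq_sub_sq_nonneg (sub_nonneg.mpr hr) (norm_nonneg a) (norm_nonneg b))
  linarith
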